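/- Let z, σ, τ ∈ ℝ and let Φ : ℤ → ℝ be any real sequence. Define Ψ_j := (A(z)Φ)_j for the five-point scheme and set a₁ := z²(z² − 1)/4 + 2zσ + 2τ, a₂ := −zσ/4 + σ²/2 − z²τ/2, a₃ := −σ²/4 + τ². Then for every j ∈ ℤ one has Ψ_j² = Φ_j² + T_j − T_{j−1} + S_j, where T_j := wᵀ Q w with w := (Φ_j, (DΦ)_{j+1}, (ΔΦ)_j, (DΔΦ)_{j+1}) ∈ ℝ⁴, Q the symmetric 4×4 matrix with entries Q₁₁ = −z, Q₁₂ = −z(1 − z)/2, Q₁₃ = σ, Q₁₄ = σ/2 + τ, Q₂₂ = z²(1 − z)/2 − σ, Q₂₃ = σ/2 − zσ − τ, Q₂₄ = −z(σ/2 + τ), Q₃₃ = z²σ/2 + zτ, Q₃₄ = (z(1 + z)/2)(σ/2 + τ) − a₁/3, Q₄₄ = zσ/4 + z²τ/2 + στ − a₁/3, and where S_j := (a₁/3)·(u² + v² + w²) + a₂·((v − u)² + (w − v)²) + a₃·(u − 2v + w)² with (u, v, w) := ((ΔΦ)_{j−1}, (ΔΦ)_j, (ΔΦ)_{j+1}).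 -/
import Mathlib


/-- Backward difference `(DΦ)_j = Φ_j - Φ_{j-1}`. -/
noncomputable def Dd (Φ : ℤ → ℝ) (j : ℤ) : ℝ := Φ j - Φ (j - 1)

/-- Centered difference `(D₀Φ)_j = (Φ_{j+1} - Φ_{j-1})/2`. -/
noncomputable def D0 (Φ : ℤ → ℝ) (j : ℤ) : ℝ := (Φ (j + 1) - Φ (j - 1)) / 2

/-- Discrete Laplacian `(ΔΦ)_j = Φ_{j-1} - 2Φ_j + Φ_{j+1}`. -/
noncomputable def Lap (Φ : ℤ → ℝ) (j : ℤ) : ℝ := Φ (j - 1) - 2 * Φ j + Φ (j + 1)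

/-- `(DΔΦ)_j = (ΔΦ)_j - (ΔΦ)_{j-1}`. -/
noncomputable def DLap (Φ : ℤ → ℝ) (j : ℤ) : ℝ := Lap Φ j - Lap Φ (j - 1)

/-- `(D₀ΔΦ)_j = (-Φ_{j-2} + 2Φ_{j-1} - 2Φ_{j+1} + Φ_{j+2})/2`. -/
noncomputable def D0Lap (Φ : ℤ → ℝ) (j : ℤ) : ℝ :=
  (-Φ (j - 2) + 2 * Φ (j - 1) - 2 * Φ (j + 1) + Φ (j + 2)) / 2

/-- `(Δ²Φ)_j = Φ_{j-2} - 4Φ_{j-1} + 6Φ_j - 4Φ_{j+1} + Φ_{j+2}`. -/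
noncomputable def Lap2 (Φ : ℤ → ℝ) (j : ℤ) : ℝ :=
  Φ (j - 2) - 4 * Φ (j - 1) + 6 * Φ j - 4 * Φ (j + 1) + Φ (j + 2)

/-- The five point scheme `A(z)Φ = Φ - z D₀Φ + (z²/2) ΔΦ + σ D₀ΔΦ + τ Δ²Φ`. -/
noncomputable def A5 (z σ τ : ℝ) (Φ : ℤ → ℝ) (j : ℤ) : ℝ :=
  Φ j - z * D0 Φ j + z ^ 2 / 2 * Lap Φ j + σ * D0Lap Φ j + τ * Lap2 Φ j

open Matrix

/-- Coefficient `a₁` of the five point dissipation form. -/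
noncomputable def a1 (z σ τ : ℝ) : ℝ := z ^ 2 * (z ^ 2 - 1) / 4 + 2 * z * σ + 2 * τ

/-- Coefficient `a₂` of the five point dissipation form. -/
noncomputable def a2 (z σ τ : ℝ) : ℝ := -(z * σ) / 4 + σ ^ 2 / 2 - z ^ 2 * τ / 2

/-- Coefficient `a₃` of the five point dissipation form. -/
noncomputable def a3 (z σ τ : ℝ) : ℝ := -(σ ^ 2) / 4 + τ ^ 2

/-- The symmetric matrix `Q` of the telescopic part for the five point scheme. -/
noncomputable def Q5 (z σ τ : ℝ) : Matrix (Fin 4) (Fin 4) ℝ :=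
  !![-z, -(z * (1 - z)) / 2, σ, σ / 2 + τ;
     -(z * (1 - z)) / 2, z ^ 2 * (1 - z) / 2 - σ, σ / 2 - z * σ - τ, -z * (σ / 2 + τ);
     σ, σ / 2 - z * σ - τ, z ^ 2 * σ / 2 + z * τ,
       z * (1 + z) / 2 * (σ / 2 + τ) - a1 z σ τ / 3;
     σ / 2 + τ, -z * (σ / 2 + τ), z * (1 + z) / 2 * (σ / 2 + τ) - a1 z σ τ / 3,
       z * σ / 4 + z ^ 2 * τ / 2 + σ * τ - a1 z σ τ / 3]

/-- Telescopic part `T_j = wᵀ Q w` with `w = (Φ_j, (DΦ)_{j+1}, (ΔΦ)_j, (DΔΦ)_{j+1})`. -/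
noncomputable def T5 (z σ τ : ℝ) (Φ : ℤ → ℝ) (j : ℤ) : ℝ :=
  ![Φ j, Dd Φ (j + 1), Lap Φ j, DLap Φ (j + 1)] ⬝ᵥ
    (Q5 z σ τ).mulVec ![Φ j, Dd Φ (j + 1), Lap Φ j, DLap Φ (j + 1)]

/-- Dissipative part `S_j` of the five point scheme decomposition. -/
noncomputable def S5 (z σ τ : ℝ) (Φ : ℤ → ℝ) (j : ℤ) : ℝ :=
  a1 z σ τ / 3 * ((Lap Φ (j - 1)) ^ 2 + (Lap Φ j) ^ 2 + (Lap Φ (j + 1)) ^ 2)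
    + a2 z σ τ * ((Lap Φ j - Lap Φ (j - 1)) ^ 2 + (Lap Φ (j + 1) - Lap Φ j) ^ 2)
    + a3 z σ τ * (Lap Φ (j - 1) - 2 * Lap Φ j + Lap Φ (j + 1)) ^ 2

/-- Integration-by-parts decomposition for the five point scheme. -/
theorem five_point_decomposition (z σ τ : ℝ) (Φ : ℤ → ℝ) (Ψ : ℤ → ℝ)
    (hΨ : ∀ j, Ψ j = A5 z σ τ Φ j) :
    ∀ j : ℤ, (Ψ j) ^ 2 = (Φ j) ^ 2 + T5 z σ τ Φ j - T5 z σ τ Φ (j - 1) + S5 z σ τ Φ j := by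
  intro j
  rw [hΨ]
  simp only [A5, T5, S5, Q5, D0, D0Lap, Lap2, DLap, Lap, Dd, a1, a2, a3,
    Matrix.mulVec, dotProduct, Fin.sum_univ_four, Matrix.cons_val',
    Matrix.cons_val_zero, Matrix.cons_val_one, Matrix.head_cons, Matrix.empty_val',
    Matrix.cons_val_fin_one, Matrix.head_fin_const, Matrix.cons_val_two,
    Matrix.tail_cons, Matrix.cons_val_three, Matrix.of_apply,
    show j - 1 + 1 = j from by ring, show j + 1 - 1 = j from by ring,
    show j - 1 - 1 = j - 2 from by ring, show j + 1 + 1 = j + 2 from by ring,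
    show j - 1 + 2 = j + 1 from by ring, show j + 1 - 2 = j - 1 from by ring,
    show j + 2 - 1 = j + 1 from by ring, show j - 2 + 1 = j - 1 from by ring]
  ring
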